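/- Let Σ be an alphabet, N a monoid, gmap : Σ × Σ → N a map, g : ℕ → ℕ strictly increasing, and y₁, y₂ : ℕ → Σ ω-words. Suppose there are elements t, t↑, t↓ ∈ N such that g is a (gmap, t)-homogeneous factorisation of zip(y₁,y₁) and of zip(y₂,y₂), a (gmap, t↑)-homogeneous factorisation of zip(y₁,y₂), and a (gmap, t↓)-homogeneous factorisation of zip(y₂,y₁). Then for all S, T ⊆ ℕ and every n ∈ ℕ, the gmap-value of the block of zip(χ_S, χ_T) on the interval [g(n), g(n+1)) equals t↓ if n ∈ S \ T, equals t↑ if n ∈ T \ S, and equals t if n ∈ S ∩ T or n ∉ S ∪ T; moreover the gmap-value of the prefix of zip(χ_S, χ_T) below g(0) equals that of zip(y₂,y₂) below g(0). -/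

import Mathlib

/-! On the block `[g n, g (n+1))` each shuffle is one of `y₁`, `y₂` throughout, so the block of
`zip(χ_S, χ_T)` is the corresponding block of one of the four convolutions of `y₁`, `y₂`. -/

/-- The convolution of two ω-words. -/
def zipWord {A B : Type*} (x : ℕ → A) (y : ℕ → B) : ℕ → A × B := fun n => (x n, y n)

/-- The product `f(α[m,n)) = f (α m) * f (α (m+1)) * ⋯ * f (α (n-1))` in a monoid. -/
def blockProd {A M : Type*} [Monoid M] (f : A → M) (α : ℕ → A) (m n : ℕ) : M :=
  ((List.range' m (n - m)).map fun i => f (α i)).prod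

/-- A strictly increasing sequence `g` is an `(f,e)`-homogeneous factorisation of `α`
if `f(α[g n, g (n+1))) = e` for all `n`. -/
def Homog {A M : Type*} [Monoid M] (f : A → M) (e : M) (g : ℕ → ℕ) (α : ℕ → A) : Prop :=
  ∀ n : ℕ, blockProd f α (g n) (g (n + 1)) = e

open Classical in
/-- The shuffle `χ_S` of `y₁` and `y₂` along `g` and `S`: it equals `y₂` below `g 0`,
and on the block `[g n, g (n+1))` it equals `y₂` if `n ∈ S` and `y₁` otherwise. -/
noncomputable def shuffle {A : Type*} (y₁ y₂ : ℕ → A) (g : ℕ → ℕ) (S : Set ℕ) : ℕ → A :=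
  fun i =>
    if i < g 0 then y₂ i
    else if Nat.findGreatest (fun n => g n ≤ i) i ∈ S then y₂ i else y₁ i

theorem blockProd_congr {A M : Type*} [Monoid M] (f : A → M) {α β : ℕ → A} {m n : ℕ}
    (h : Set.EqOn α β (Set.Ico m n)) : blockProd f α m n = blockProd f β m n := by
  unfold blockProd
  congr 1
  refine List.map_congr_left fun i hi => ?_
  rw [List.mem_range'_1] at hi
  rw [h ⟨hi.1, by omega⟩]

theorem StrictMono.findGreatest_apply_le_eq {g : ℕ → ℕ} (hg : StrictMono g) {n i : ℕ}
    (hi : i ∈ Set.Ico (g n) (g (n + 1))) [DecidablePred fun k => g k ≤ i] :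
    Nat.findGreatest (fun k => g k ≤ i) i = n := by
  rw [Nat.findGreatest_eq_iff]
  refine ⟨hg.le_apply.trans hi.1, fun _ => hi.1, fun m hm _ hgm => ?_⟩
  exact (hg.monotone hm |>.trans hgm |>.trans_lt hi.2).false

section Shuffle

variable {A : Type*} (y₁ y₂ : ℕ → A) {g : ℕ → ℕ}

theorem shuffle_of_lt (S : Set ℕ) {i : ℕ} (hi : i < g 0) : shuffle y₁ y₂ g S i = y₂ i :=
  if_pos hi

open Classical in
theorem shuffle_of_mem_Ico (hg : StrictMono g) (S : Set ℕ) {n i : ℕ}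
    (hi : i ∈ Set.Ico (g n) (g (n + 1))) :
    shuffle y₁ y₂ g S i = (if n ∈ S then y₂ else y₁) i := by
  have hi₀ : ¬i < g 0 := not_lt.2 <| (hg.monotone n.zero_le).trans hi.1
  rw [shuffle, if_neg hi₀, hg.findGreatest_apply_le_eq hi]
  split_ifs <;> rfl

open Classical in
theorem blockProd_zipWord_shuffle {N : Type*} [Monoid N] (f : A × A → N) (hg : StrictMono g)
    (S T : Set ℕ) (n : ℕ) :
    blockProd f (zipWord (shuffle y₁ y₂ g S) (shuffle y₁ y₂ g T)) (g n) (g (n + 1)) =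
      blockProd f (zipWord (if n ∈ S then y₂ else y₁) (if n ∈ T then y₂ else y₁))
        (g n) (g (n + 1)) :=
  blockProd_congr f fun _ hi => by
    simp only [zipWord, shuffle_of_mem_Ico y₁ y₂ hg _ hi]

theorem blockProd_zipWord_shuffle_prefix {N : Type*} [Monoid N] (f : A × A → N)
    (S T : Set ℕ) :
    blockProd f (zipWord (shuffle y₁ y₂ g S) (shuffle y₁ y₂ g T)) 0 (g 0) =
      blockProd f (zipWord y₂ y₂) 0 (g 0) :=
  blockProd_congr f fun _ hi => by
    simp only [zipWord, shuffle_of_lt y₁ y₂ _ hi.2]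

end Shuffle

/-- block values of the convolution of two shuffles. -/
theorem stmt10 {A N : Type*} [Monoid N] (gmap : A × A → N) (g : ℕ → ℕ)
    (hg : StrictMono g) (y₁ y₂ : ℕ → A) (t tu td : N)
    (h₁₁ : Homog gmap t g (zipWord y₁ y₁)) (h₂₂ : Homog gmap t g (zipWord y₂ y₂))
    (h₁₂ : Homog gmap tu g (zipWord y₁ y₂)) (h₂₁ : Homog gmap td g (zipWord y₂ y₁)) :
    ∀ S T : Set ℕ,
      (∀ n : ℕ,
        (n ∈ S → n ∉ T →
          blockProd gmap (zipWord (shuffle y₁ y₂ g S) (shuffle y₁ y₂ g T)) (g n) (g (n+1)) = td) ∧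
        (n ∈ T → n ∉ S →
          blockProd gmap (zipWord (shuffle y₁ y₂ g S) (shuffle y₁ y₂ g T)) (g n) (g (n+1)) = tu) ∧
        (n ∈ S → n ∈ T →
          blockProd gmap (zipWord (shuffle y₁ y₂ g S) (shuffle y₁ y₂ g T)) (g n) (g (n+1)) = t) ∧
        (n ∉ S → n ∉ T →
          blockProd gmap (zipWord (shuffle y₁ y₂ g S) (shuffle y₁ y₂ g T)) (g n) (g (n+1)) = t)) ∧
      blockProd gmap (zipWord (shuffle y₁ y₂ g S) (shuffle y₁ y₂ g T)) 0 (g 0) =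
        blockProd gmap (zipWord y₂ y₂) 0 (g 0) := by
  intro S T
  refine ⟨fun n => ?_, blockProd_zipWord_shuffle_prefix y₁ y₂ gmap S T⟩
  rw [blockProd_zipWord_shuffle y₁ y₂ gmap hg S T n]
  refine ⟨fun hS hT => ?_, fun hT hS => ?_, fun hS hT => ?_, fun hS hT => ?_⟩
  · simpa [hS, hT] using h₂₁ n
  · simpa [hS, hT] using h₁₂ n
  · simpa [hS, hT] using h₂₂ n
  · simpa [hS, hT] using h₁₁ n
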